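/- Let τ be a locally finite positive Borel measure on ℝ supported in [0,∞). Then the following are equivalent: (a) the function M_lτ belongs to L²((0,∞), dk); (b) Σ_{n=0}^∞ τ([n,n+1])² < ∞; (c) ∫₀^∞ log[ 1 + (M_lτ(k)/k)² ] k² dk < ∞. -/

import Mathlib

open MeasureTheory Set
open scoped ENNReal

/-- The long-range Hardy–Littlewood maximal function
`(M_lτ)(x) = sup_{L ≥ 1} τ([x−L, x+L])/(2L)`. -/
noncomputable def maxLong (τ : Measure ℝ) (x : ℝ) : ℝ≥0∞ :=
  ⨆ (L : ℝ) (_ : 1 ≤ L), τ (Icc (x - L) (x + L)) / ENNReal.ofReal (2 * L)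

/-- The integrand `log[1 + (M_lτ(k)/k)²]·k²`, with value `∞` where `M_lτ(k) = ∞`. -/
noncomputable def logMaxLong (τ : Measure ℝ) (k : ℝ) : ℝ≥0∞ :=
  if maxLong τ k = ⊤ then ⊤
  else ENNReal.ofReal (Real.log (1 + ((maxLong τ k).toReal / k) ^ 2) * k ^ 2)

/-!
Write `a n = τ([n, n+1])`. For `k ∈ [m, m+1]` a window `[k-L, k+L]` with `L ≥ 1` is covered by the
unit intervals `[n, n+1]`, `|n - m| ≤ ⌈L⌉`, so `M_lτ(k)` is at most the discrete Hardy–Littlewood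
maximal function of `a` at `m`; the window `L = 1` gives `M_lτ(k) ≥ a m / 2`.

(b) ⇒ (a) is the `ℓ²` bound for the discrete maximal function: the Vitali covering lemma gives the
weak type `(1,1)` bound, and the layer cake formula, applied at each level `s` to the part of `a`
above `s/4`, upgrades it to `ℓ²`. (a) ⇒ (c) is `log (1 + u) ≤ u`. For (c) ⇒ (b),
`log (1 + u) ≥ u / (1 + u)` gives `min (M_lτ(k)², 1) ≤ 2 log[1 + (M_lτ(k)/k)²] k²` for `k ≥ 1`,
so `Σ min (a n², 1)` converges; then `a n → 0`, and eventually `min (a n², 1) = a n²`.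
-/

-- `m - W` truncates, so windows are clipped at `0`.
noncomputable def discreteMaximal (b : ℕ → ℝ≥0∞) (m : ℕ) : ℝ≥0∞ :=
  ⨆ (W : ℕ) (_ : 1 ≤ W), (∑ n ∈ Finset.Icc (m - W) (m + W), b n) / W

lemma Nat.closedBall_natCast_eq_Icc (m W : ℕ) :
    Metric.closedBall m (W : ℝ) = Finset.Icc (m - W) (m + W) := by
  rw [Nat.closedBall_eq_Icc, Finset.coe_Icc]
  congr 1
  · rcases le_total W m with h | h
    · rw [← Nat.cast_sub h, Nat.ceil_natCast]
    · rw [Nat.sub_eq_zero_of_le h, Nat.ceil_eq_zero]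
      simp [h]
  · exact_mod_cast Nat.floor_natCast _

lemma le_discreteMaximal (b : ℕ → ℝ≥0∞) {W : ℕ} (hW : 1 ≤ W) (m : ℕ) :
    (∑ n ∈ Finset.Icc (m - W) (m + W), b n) / W ≤ discreteMaximal b m :=
  le_iSup₂ (f := fun (W : ℕ) (_ : 1 ≤ W) => (∑ n ∈ Finset.Icc (m - W) (m + W), b n) / W) W hW

lemma exists_lt_sum_of_lt_discreteMaximal {b : ℕ → ℝ≥0∞} {c : ℝ≥0∞} {m : ℕ}
    (h : c < discreteMaximal b m) :
    ∃ W : ℕ, 1 ≤ W ∧ c * W < ∑ n ∈ Finset.Icc (m - W) (m + W), b n := by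
  obtain ⟨W, hlt⟩ := lt_iSup_iff.mp h
  obtain ⟨hW, hlt⟩ := lt_iSup_iff.mp hlt
  have hW0 : (W : ℝ≥0∞) ≠ 0 := by exact_mod_cast Nat.one_le_iff_ne_zero.mp hW
  exact ⟨W, hW, (ENNReal.lt_div_iff_mul_lt (.inl hW0) (.inl (ENNReal.natCast_ne_top W))).mp hlt⟩

lemma discreteMaximal_le_add {b b' : ℕ → ℝ≥0∞} {c : ℝ≥0∞} (h : ∀ n, b n ≤ b' n + c) (m : ℕ) :
    discreteMaximal b m ≤ discreteMaximal b' m + 3 * c := by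
  refine iSup₂_le fun W hW => ?_
  have hW0 : (W : ℝ≥0∞) ≠ 0 := by exact_mod_cast (Nat.one_le_iff_ne_zero.mp hW)
  calc (∑ n ∈ Finset.Icc (m - W) (m + W), b n) / W
      ≤ (∑ n ∈ Finset.Icc (m - W) (m + W), b' n) / W
          + (Finset.Icc (m - W) (m + W)).card * c / W := by
        rw [← ENNReal.add_div, ← nsmul_eq_mul, ← Finset.sum_const, ← Finset.sum_add_distrib]
        gcongr with n
        exact h n
    _ ≤ discreteMaximal b' m + 3 * c := by
        gcongr
        · exact le_discreteMaximal b' hW m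
        · rw [ENNReal.div_le_iff hW0 (ENNReal.natCast_ne_top W), mul_right_comm]
          gcongr
          rw [Nat.card_Icc]
          exact_mod_cast (by omega : m + W + 1 - (m - W) ≤ 3 * W)

theorem count_lt_discreteMaximal_le {b : ℕ → ℝ≥0∞} {c : ℝ≥0∞} (hc0 : c ≠ 0) (hc : c ≠ ⊤) :
    Measure.count {m | c < discreteMaximal b m} ≤ 9 * (∑' n, b n) / c := by
  set B := ∑' n, b n
  rcases eq_or_ne B ⊤ with hB | hB
  · simp [hB, ENNReal.mul_top, ENNReal.top_div, hc]
  set E := {m | c < discreteMaximal b m}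
  choose! W hW1 hWsum using fun m (hm : m ∈ E) => exists_lt_sum_of_lt_discreteMaximal hm
  have hWB : ∀ m ∈ E, (W m : ℝ) ≤ (B / c).toReal := by
    intro m hm
    have : (W m : ℝ≥0∞) ≤ B / c := by
      rw [ENNReal.le_div_iff_mul_le (.inl hc0) (.inl hc), mul_comm]
      exact (hWsum m hm).le.trans (ENNReal.sum_le_tsum _)
    simpa using ENNReal.toReal_mono (ENNReal.div_ne_top hB hc0) this
  obtain ⟨u, huE, hu_disj, hu_cover⟩ :=
    Vitali.exists_disjoint_subfamily_covering_enlargement_closedBall E (fun m => m)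
      (fun m => (W m : ℝ)) _ hWB 4 (by norm_num)
  have hcount : Measure.count E ≤ 9 * ∑' m : u, (W m : ℝ≥0∞) := by
    have hE : E ⊆ ⋃ m ∈ u, Metric.closedBall m ((4 * W m : ℕ) : ℝ) := by
      intro m hm
      obtain ⟨m', hm'u, hsub⟩ := hu_cover m hm
      push_cast
      exact mem_biUnion hm'u (hsub (Metric.mem_closedBall_self (by positivity)))
    refine (measure_mono hE).trans ((measure_biUnion_le _ u.to_countable _).trans ?_)
    rw [← ENNReal.tsum_mul_left]
    refine ENNReal.tsum_le_tsum fun m => ?_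
    rw [Nat.closedBall_natCast_eq_Icc, Measure.count_apply_finset, Nat.card_Icc]
    have := hW1 m (huE m.2)
    exact_mod_cast (by omega : m + 4 * W m + 1 - (m - 4 * W m) ≤ 9 * W m)
  -- each selected ball carries mass `> c * W m`, and these balls are disjoint
  have hpack : c * ∑' m : u, (W m : ℝ≥0∞) ≤ B := by
    calc c * ∑' m : u, (W m : ℝ≥0∞)
        ≤ ∑' m : u, ∑' n : Metric.closedBall (m : ℕ) (W m : ℝ), b n := by
          rw [← ENNReal.tsum_mul_left]
          refine ENNReal.tsum_le_tsum fun m => ?_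
          rw [Nat.closedBall_natCast_eq_Icc, Finset.tsum_subtype']
          exact (hWsum m (huE m.2)).le
      _ = ∑' n : ⋃ m ∈ u, Metric.closedBall m (W m : ℝ), b n :=
          (ENNReal.tsum_biUnion' hu_disj).symm
      _ ≤ B := ENNReal.tsum_comp_le_tsum_of_injective Subtype.val_injective b
  calc Measure.count E ≤ 9 * ∑' m : u, (W m : ℝ≥0∞) := hcount
    _ ≤ 9 * (B / c) := by
        gcongr
        rwa [ENNReal.le_div_iff_mul_le (.inl hc0) (.inl hc), mul_comm]
    _ = 9 * B / c := (mul_div_assoc _ _ _).symm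

lemma Ioi_inter_setOf_ofReal_lt {x : ℝ≥0∞} (hx : x ≠ ⊤) :
    Ioi 0 ∩ {t : ℝ | ENNReal.ofReal t < x} = Ioo 0 x.toReal := by
  ext t
  simp only [mem_inter_iff, mem_Ioi, mem_ofPred_eq, mem_Ioo, and_congr_right_iff]
  exact fun ht => ENNReal.ofReal_lt_iff_lt_toReal ht.le hx

lemma volume_Ioi_inter_setOf_ofReal_lt (x : ℝ≥0∞) :
    volume (Ioi 0 ∩ {t : ℝ | ENNReal.ofReal t < x}) = x := by
  rcases eq_or_ne x ⊤ with rfl | hx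
  · simp
  · rw [Ioi_inter_setOf_ofReal_lt hx, Real.volume_Ioo, sub_zero, ENNReal.ofReal_toReal hx]

lemma lintegral_Ioo_ofReal_two_mul {s : ℝ} (hs : 0 ≤ s) :
    ∫⁻ t in Ioo 0 s, ENNReal.ofReal (2 * t) = ENNReal.ofReal s ^ 2 := by
  have hint : IntegrableOn (fun t : ℝ => 2 * t) (Ioo 0 s) :=
    (continuous_const.mul continuous_id).integrableOn_Icc.mono_set Ioo_subset_Icc_self
  rw [← ofReal_integral_eq_lintegral_ofReal hint
    (ae_restrict_of_forall_mem measurableSet_Ioo fun t ht => by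
      simp only [Pi.zero_apply]
      linarith [ht.1]),
    ← integral_Ioc_eq_integral_Ioo, ← intervalIntegral.integral_of_le hs,
    intervalIntegral.integral_const_mul, integral_id, ← ENNReal.ofReal_pow hs]
  ring_nf

lemma setLIntegral_ofReal_two_mul (x : ℝ≥0∞) :
    ∫⁻ t in Ioi 0 ∩ {t : ℝ | ENNReal.ofReal t < x}, ENNReal.ofReal (2 * t) = x ^ 2 := by
  rcases eq_or_ne x ⊤ with rfl | hx
  · refine ENNReal.eq_top_of_forall_nnreal_le fun r => ?_
    calc (r : ℝ≥0∞) ≤ ENNReal.ofReal (r + 1) ^ 2 := by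
          rw [← ENNReal.ofReal_pow (by positivity), ← ENNReal.ofReal_coe_nnreal]
          exact ENNReal.ofReal_le_ofReal (by nlinarith [r.2])
      _ = ∫⁻ t in Ioo 0 (r + 1 : ℝ), ENNReal.ofReal (2 * t) :=
          (lintegral_Ioo_ofReal_two_mul (by positivity)).symm
      _ ≤ _ := lintegral_mono_set fun t ht =>
          show t ∈ Ioi 0 ∩ _ from ⟨ht.1, ENNReal.ofReal_lt_top⟩
  · rw [Ioi_inter_setOf_ofReal_lt hx, lintegral_Ioo_ofReal_two_mul ENNReal.toReal_nonneg,
      ENNReal.ofReal_toReal hx]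

theorem lintegral_sq_eq_lintegral_meas_lt {α : Type*} [MeasurableSpace α] (μ : Measure α)
    [SFinite μ] {f : α → ℝ≥0∞} (hf : Measurable f) :
    ∫⁻ a, f a ^ 2 ∂μ =
      ∫⁻ t in Ioi 0, ENNReal.ofReal (2 * t) * μ {a | ENNReal.ofReal t < f a} := by
  set S := {p : α × ℝ | ENNReal.ofReal p.2 < f p.1}
  have hS : MeasurableSet S :=
    measurableSet_lt (ENNReal.measurable_ofReal.comp measurable_snd) (hf.comp measurable_fst)
  set F : α → ℝ → ℝ≥0∞ := fun a t => S.indicator (fun p => ENNReal.ofReal (2 * p.2)) (a, t)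
  have hF : Measurable (Function.uncurry F) :=
    (ENNReal.measurable_ofReal.comp (measurable_const.mul measurable_snd)).indicator hS
  calc ∫⁻ a, f a ^ 2 ∂μ = ∫⁻ a, (∫⁻ t in Ioi 0, F a t) ∂μ := by
        refine lintegral_congr fun a => ?_
        have hT : MeasurableSet {t : ℝ | ENNReal.ofReal t < f a} :=
          measurableSet_lt ENNReal.measurable_ofReal measurable_const
        rw [← setLIntegral_ofReal_two_mul, inter_comm, ← Measure.restrict_restrict hT,
          ← lintegral_indicator hT]
        rfl
    _ = ∫⁻ t in Ioi 0, ∫⁻ a, F a t ∂μ := lintegral_lintegral_swap hF.aemeasurable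
    _ = _ := by
        refine lintegral_congr fun t => ?_
        exact lintegral_indicator_const (s := {a | ENNReal.ofReal t < f a})
          (measurableSet_lt measurable_const hf) (ENNReal.ofReal (2 * t))

/-- Only the values `b n > s / 4` matter: the others raise the maximal function by at most
`3s/4`. -/
lemma count_lt_discreteMaximal_le_tsum_indicator (b : ℕ → ℝ≥0∞) {s : ℝ≥0∞} (hs0 : s ≠ 0)
    (hs : s ≠ ⊤) :
    Measure.count {m | s < discreteMaximal b m}
      ≤ 36 * (∑' n, {n | s < 4 * b n}.indicator b n) / s := by
  set c := s / 4
  have hc0 : c ≠ 0 := ENNReal.div_ne_zero.mpr ⟨hs0, by norm_num⟩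
  have hc : c ≠ ⊤ := ENNReal.div_ne_top hs (by norm_num)
  have hs4 : c + 3 * c = s := by
    rw [← one_add_mul, show (1 + 3 : ℝ≥0∞) = 4 by norm_num,
      ENNReal.mul_div_cancel (by norm_num) (by norm_num)]
  have hsplit : ∀ n, b n ≤ {n | s < 4 * b n}.indicator b n + c := by
    intro n
    by_cases h : s < 4 * b n
    · simp [h]
    · rw [indicator_of_notMem (show n ∉ {n | s < 4 * b n} from h), zero_add,
        ENNReal.le_div_iff_mul_le (by norm_num) (by norm_num), mul_comm]
      exact not_lt.mp h
  calc Measure.count {m | s < discreteMaximal b m}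
      ≤ Measure.count
          {m | c < discreteMaximal (fun n => {n | s < 4 * b n}.indicator b n) m} := by
        refine measure_mono fun m (hm : s < _) => lt_of_add_lt_add_right (a := 3 * c) ?_
        rw [hs4]
        exact hm.trans_le (discreteMaximal_le_add hsplit m)
    _ ≤ 9 * (∑' n, {n | s < 4 * b n}.indicator b n) / c := count_lt_discreteMaximal_le hc0 hc
    _ = 36 * (∑' n, {n | s < 4 * b n}.indicator b n) / s := by
        rw [ENNReal.div_eq_inv_mul, ENNReal.div_eq_inv_mul, show c⁻¹ = 4 * s⁻¹ by
          rw [ENNReal.inv_div (.inr hs) (.inr hs0), div_eq_mul_inv]]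
        ring

theorem tsum_discreteMaximal_sq_le (b : ℕ → ℝ≥0∞) :
    ∑' m, discreteMaximal b m ^ 2 ≤ 288 * ∑' n, b n ^ 2 := by
  have hweak : ∀ t ∈ Ioi (0 : ℝ),
      ENNReal.ofReal (2 * t) * Measure.count {m | ENNReal.ofReal t < discreteMaximal b m}
        ≤ 72 * ∑' n, {t : ℝ | ENNReal.ofReal t < 4 * b n}.indicator (fun _ => b n) t := by
    intro t (ht : 0 < t)
    have ht0 : ENNReal.ofReal t ≠ 0 := by simpa using ht
    set T := ∑' n, {n | ENNReal.ofReal t < 4 * b n}.indicator b n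
    calc ENNReal.ofReal (2 * t) * Measure.count {m | ENNReal.ofReal t < discreteMaximal b m}
        ≤ 2 * ENNReal.ofReal t * (36 * T / ENNReal.ofReal t) := by
          rw [ENNReal.ofReal_mul zero_le_two, ENNReal.ofReal_ofNat]
          gcongr
          exact count_lt_discreteMaximal_le_tsum_indicator b ht0 ENNReal.ofReal_ne_top
      _ = 72 * (ENNReal.ofReal t * (T / ENNReal.ofReal t)) := by
          rw [mul_div_assoc]
          ring
      _ = 72 * T := by rw [ENNReal.mul_div_cancel ht0 ENNReal.ofReal_ne_top]
  calc ∑' m, discreteMaximal b m ^ 2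
      = ∫⁻ t in Ioi 0, ENNReal.ofReal (2 * t)
          * Measure.count {m | ENNReal.ofReal t < discreteMaximal b m} := by
        rw [← lintegral_count, lintegral_sq_eq_lintegral_meas_lt _ (measurable_of_countable _)]
    _ ≤ ∫⁻ t in Ioi 0,
          72 * ∑' n, {t : ℝ | ENNReal.ofReal t < 4 * b n}.indicator (fun _ => b n) t :=
        setLIntegral_mono' measurableSet_Ioi hweak
    _ = 72 * ∑' n, b n * volume (Ioi 0 ∩ {t : ℝ | ENNReal.ofReal t < 4 * b n}) := by
        have hT : ∀ n, MeasurableSet {t : ℝ | ENNReal.ofReal t < 4 * b n} := fun n =>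
          measurableSet_lt ENNReal.measurable_ofReal measurable_const
        rw [lintegral_const_mul' _ _ (by norm_num),
          lintegral_tsum fun n => (measurable_const.indicator (hT n)).aemeasurable]
        refine congrArg _ (tsum_congr fun n => ?_)
        rw [lintegral_indicator_const (hT n), Measure.restrict_apply (hT n), inter_comm]
    _ = 288 * ∑' n, b n ^ 2 := by
        rw [← ENNReal.tsum_mul_left, ← ENNReal.tsum_mul_left]
        refine tsum_congr fun n => ?_
        rw [volume_Ioi_inter_setOf_ofReal_lt]
        ring

lemma lintegral_Ioi_zero_eq_tsum_Ico (f : ℝ → ℝ≥0∞) :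
    ∫⁻ x in Ioi 0, f x = ∑' n : ℕ, ∫⁻ x in Ico (n : ℝ) (n + 1), f x := by
  have hU : ⋃ n : ℕ, Ico (n : ℝ) (n + 1) = Ici 0 := by
    ext x
    simp only [mem_iUnion, mem_Ico, mem_Ici]
    exact ⟨fun ⟨n, hn, _⟩ => (Nat.cast_nonneg n).trans hn,
      fun hx => ⟨⌊x⌋₊, Nat.floor_le hx, Nat.lt_floor_add_one x⟩⟩
  rw [setLIntegral_congr Ioi_ae_eq_Ici, ← hU, lintegral_iUnion (fun _ => measurableSet_Ico)]
  intro i j hij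
  simpa using pairwise_disjoint_Ico_intCast ℝ (Nat.cast_injective.ne hij : (i : ℤ) ≠ j)

lemma Icc_natCast_subset_biUnion_Icc {p q : ℕ} (hpq : p ≤ q) :
    Icc (p : ℝ) (q + 1) ⊆ ⋃ n ∈ Finset.Icc p q, Icc (n : ℝ) (n + 1) := by
  rintro x ⟨hpx, hxq⟩
  have hx0 : 0 ≤ x := (Nat.cast_nonneg p).trans hpx
  rcases le_or_gt ⌊x⌋₊ q with h | h
  · exact mem_biUnion (Finset.mem_Icc.mpr ⟨Nat.le_floor hpx, h⟩)
      ⟨Nat.floor_le hx0, (Nat.lt_floor_add_one x).le⟩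
  · have : ((q + 1 : ℕ) : ℝ) ≤ x := (Nat.le_floor_iff hx0).mp h
    push_cast at this
    exact mem_biUnion (Finset.mem_Icc.mpr ⟨hpq, le_rfl⟩) ⟨by linarith, hxq⟩

lemma maxLong_le_discreteMaximal {τ : Measure ℝ} (hsupp : τ (Iio 0) = 0) {m : ℕ} {k : ℝ}
    (hk : k ∈ Icc (m : ℝ) (m + 1)) :
    maxLong τ k ≤ discreteMaximal (fun n => τ (Icc (n : ℝ) (n + 1))) m := by
  refine iSup₂_le fun L hL => ?_
  set W := ⌈L⌉₊
  have hL0 : 0 < L := zero_lt_one.trans_le hL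
  have hW1 : 1 ≤ W := Nat.one_le_ceil_iff.mpr hL0
  have hLW : L ≤ W := Nat.le_ceil L
  have hW2L : (W : ℝ) ≤ 2 * L := by linarith [Nat.ceil_lt_add_one hL0.le]
  have hcover : Icc (k - L) (k + L) ⊆ Iio 0 ∪ Icc ((m - W : ℕ) : ℝ) ((m + W : ℕ) + 1) := by
    intro x hx
    rcases lt_or_ge x 0 with hx0 | hx0
    · exact .inl hx0
    · refine .inr ⟨?_, ?_⟩
      · rcases le_total W m with h | h
        · rw [Nat.cast_sub h]
          linarith [hx.1, hk.1]
        · simpa [Nat.sub_eq_zero_of_le h] using hx0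
      · push_cast
        linarith [hx.2, hk.2]
  have hτ : τ (Icc (k - L) (k + L)) ≤ ∑ n ∈ Finset.Icc (m - W) (m + W), τ (Icc (n : ℝ) (n + 1)) :=
    calc τ (Icc (k - L) (k + L))
        ≤ τ (Iio 0) + τ (⋃ n ∈ Finset.Icc (m - W) (m + W), Icc (n : ℝ) (n + 1)) :=
          (measure_mono (hcover.trans (union_subset_union_right _
            (Icc_natCast_subset_biUnion_Icc (by omega))))).trans (measure_union_le _ _)
      _ ≤ _ := by
          rw [hsupp, zero_add]
          exact measure_biUnion_finset_le _ _
  calc τ (Icc (k - L) (k + L)) / ENNReal.ofReal (2 * L)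
      ≤ (∑ n ∈ Finset.Icc (m - W) (m + W), τ (Icc (n : ℝ) (n + 1))) / W := by
        gcongr
        rw [← ENNReal.ofReal_natCast]
        exact ENNReal.ofReal_le_ofReal hW2L
    _ ≤ _ := le_discreteMaximal _ hW1 m

lemma measure_Icc_div_two_le_maxLong (τ : Measure ℝ) {n : ℕ} {k : ℝ}
    (hk : k ∈ Icc (n : ℝ) (n + 1)) : τ (Icc (n : ℝ) (n + 1)) / 2 ≤ maxLong τ k :=
  calc τ (Icc (n : ℝ) (n + 1)) / 2 ≤ τ (Icc (k - 1) (k + 1)) / ENNReal.ofReal (2 * 1) := by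
        rw [mul_one, ENNReal.ofReal_ofNat]
        gcongr
        · linarith [hk.2]
        · exact hk.1
    _ ≤ maxLong τ k := le_iSup₂ (f := fun (L : ℝ) (_ : 1 ≤ L) =>
        τ (Icc (k - L) (k + L)) / ENNReal.ofReal (2 * L)) 1 le_rfl

theorem lintegral_maxLong_sq_le {τ : Measure ℝ} (hsupp : τ (Iio 0) = 0) :
    ∫⁻ k in Ioi 0, maxLong τ k ^ 2 ≤ 288 * ∑' n : ℕ, τ (Icc (n : ℝ) (n + 1)) ^ 2 := by
  set a := fun n : ℕ => τ (Icc (n : ℝ) (n + 1))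
  calc ∫⁻ k in Ioi 0, maxLong τ k ^ 2
      = ∑' m : ℕ, ∫⁻ k in Ico (m : ℝ) (m + 1), maxLong τ k ^ 2 := lintegral_Ioi_zero_eq_tsum_Ico _
    _ ≤ ∑' m : ℕ, ∫⁻ _ in Ico (m : ℝ) (m + 1), discreteMaximal a m ^ 2 :=
        ENNReal.tsum_le_tsum fun m => setLIntegral_mono' measurableSet_Ico fun k hk => by
          gcongr
          exact maxLong_le_discreteMaximal hsupp (Ico_subset_Icc_self hk)
    _ = ∑' m : ℕ, discreteMaximal a m ^ 2 := by simp [Real.volume_Ico]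
    _ ≤ 288 * ∑' n, a n ^ 2 := tsum_discreteMaximal_sq_le a

lemma Real.log_one_add_div_sq_mul_sq_le (x : ℝ) {k : ℝ} (hk : k ≠ 0) :
    Real.log (1 + (x / k) ^ 2) * k ^ 2 ≤ x ^ 2 :=
  calc Real.log (1 + (x / k) ^ 2) * k ^ 2 ≤ (x / k) ^ 2 * k ^ 2 := by
        gcongr
        linarith [Real.log_le_sub_one_of_pos (show 0 < 1 + (x / k) ^ 2 by positivity)]
    _ = x ^ 2 := by field_simp

lemma Real.min_sq_one_le_two_mul_log_one_add_div_sq (x : ℝ) {k : ℝ} (hk : 1 ≤ k) :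
    min (x ^ 2) 1 ≤ 2 * (Real.log (1 + (x / k) ^ 2) * k ^ 2) := by
  have hk0 : 0 < k := zero_lt_one.trans_le hk
  have hk2 : 1 ≤ k ^ 2 := one_le_pow₀ hk
  have hlog : x ^ 2 / (k ^ 2 + x ^ 2) ≤ Real.log (1 + (x / k) ^ 2) := by
    have := Real.one_sub_inv_le_log_of_pos (show 0 < 1 + (x / k) ^ 2 by positivity)
    convert this using 1
    field_simp
    ring
  have hmin : min (x ^ 2) 1 * (k ^ 2 + x ^ 2) ≤ 2 * (x ^ 2 * k ^ 2) := by
    rcases le_total (x ^ 2) 1 with h | h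
    · rw [min_eq_left h]
      nlinarith [mul_le_mul_of_nonneg_left (h.trans hk2) (sq_nonneg x)]
    · rw [min_eq_right h]
      nlinarith [mul_le_mul_of_nonneg_left h (sq_nonneg k),
        mul_le_mul_of_nonneg_left hk2 (sq_nonneg x)]
  calc min (x ^ 2) 1 ≤ 2 * (x ^ 2 / (k ^ 2 + x ^ 2) * k ^ 2) := by
        rw [div_mul_eq_mul_div, mul_div_assoc', le_div_iff₀ (by positivity)]
        exact hmin
    _ ≤ 2 * (Real.log (1 + (x / k) ^ 2) * k ^ 2) := by gcongr

lemma logMaxLong_le_sq (τ : Measure ℝ) {k : ℝ} (hk : 0 < k) :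
    logMaxLong τ k ≤ maxLong τ k ^ 2 := by
  unfold logMaxLong
  split_ifs with h
  · simp [h]
  · set x := (maxLong τ k).toReal
    rw [← ENNReal.ofReal_toReal h, ← ENNReal.ofReal_pow ENNReal.toReal_nonneg]
    exact ENNReal.ofReal_le_ofReal (Real.log_one_add_div_sq_mul_sq_le _ hk.ne')

lemma min_sq_one_le_two_mul_logMaxLong (τ : Measure ℝ) {k : ℝ} (hk : 1 ≤ k) :
    min (maxLong τ k ^ 2) 1 ≤ 2 * logMaxLong τ k := by
  unfold logMaxLong
  split_ifs with h
  · simp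
  · set x := (maxLong τ k).toReal
    rw [← ENNReal.ofReal_toReal h, ← ENNReal.ofReal_pow ENNReal.toReal_nonneg, ← ENNReal.ofReal_one,
      ← ENNReal.ofReal_min, ← ENNReal.ofReal_ofNat, ← ENNReal.ofReal_mul zero_le_two]
    exact ENNReal.ofReal_le_ofReal (Real.min_sq_one_le_two_mul_log_one_add_div_sq _ hk)

lemma ENNReal.tsum_lt_top_of_tsum_min_one_lt_top {x : ℕ → ℝ≥0∞} (hx : ∀ n, x n ≠ ⊤)
    (h : ∑' n, min (x n) 1 < ⊤) : ∑' n, x n < ⊤ := by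
  obtain ⟨N, hN⟩ := Filter.eventually_atTop.mp
    ((ENNReal.tendsto_atTop_zero_of_tsum_ne_top h.ne).eventually_lt_const zero_lt_one)
  have hle : ∀ n, x n ≤ (if n < N then x n else 0) + min (x n) 1 := by
    intro n
    split_ifs with hn
    · exact le_self_add
    · have hlt : x n < 1 := (min_lt_iff.mp (hN n (not_lt.mp hn))).resolve_right (lt_irrefl 1)
      rw [zero_add, min_eq_left hlt.le]
  calc ∑' n, x n ≤ ∑' n, ((if n < N then x n else 0) + min (x n) 1) := ENNReal.tsum_le_tsum hle
    _ = ∑ n ∈ Finset.range N, x n + ∑' n, min (x n) 1 := by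
        rw [ENNReal.tsum_add,
          tsum_eq_sum (s := Finset.range N) fun n hn => if_neg (by simpa using hn)]
        congr 1
        exact Finset.sum_congr rfl fun n hn => if_pos (Finset.mem_range.mp hn)
    _ < ⊤ := ENNReal.add_lt_top.mpr ⟨ENNReal.sum_lt_top.mpr fun n _ => (hx n).lt_top, h⟩

theorem tsum_sq_lt_top_of_lintegral_logMaxLong_lt_top (τ : Measure ℝ) [IsLocallyFiniteMeasure τ]
    (h : ∫⁻ k in Ioi 0, logMaxLong τ k < ⊤) : ∑' n : ℕ, τ (Icc (n : ℝ) (n + 1)) ^ 2 < ⊤ := by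
  set a := fun n : ℕ => τ (Icc (n : ℝ) (n + 1))
  have ha : ∀ n, a n ≠ ⊤ := fun n => isCompact_Icc.measure_lt_top.ne
  have hmin : ∑' n, min ((a (n + 1) / 2) ^ 2) 1 < ⊤ :=
    calc ∑' n, min ((a (n + 1) / 2) ^ 2) 1
        = ∑' n, ∫⁻ _ in Ico ((n + 1 : ℕ) : ℝ) ((n + 1 : ℕ) + 1), min ((a (n + 1) / 2) ^ 2) 1 := by
          simp [Real.volume_Ico]
      _ ≤ ∑' n, ∫⁻ k in Ico ((n + 1 : ℕ) : ℝ) ((n + 1 : ℕ) + 1), 2 * logMaxLong τ k :=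
          ENNReal.tsum_le_tsum fun n => setLIntegral_mono' measurableSet_Ico fun k hk => by
            refine le_trans ?_ (min_sq_one_le_two_mul_logMaxLong τ (le_trans (by simp) hk.1))
            gcongr
            exact measure_Icc_div_two_le_maxLong τ (Ico_subset_Icc_self hk)
      _ ≤ ∑' n : ℕ, ∫⁻ k in Ico (n : ℝ) (n + 1), 2 * logMaxLong τ k :=
          ENNReal.tsum_comp_le_tsum_of_injective (add_left_injective 1)
            (fun n : ℕ => ∫⁻ k in Ico (n : ℝ) (n + 1), 2 * logMaxLong τ k)
      _ = 2 * ∫⁻ k in Ioi 0, logMaxLong τ k := by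
          rw [← lintegral_Ioi_zero_eq_tsum_Ico, lintegral_const_mul' _ _ (by norm_num)]
      _ < ⊤ := ENNReal.mul_lt_top (by norm_num) h
  have htail : ∑' n, a (n + 1) ^ 2 < ⊤ :=
    calc ∑' n, a (n + 1) ^ 2 = 4 * ∑' n, (a (n + 1) / 2) ^ 2 := by
          rw [← ENNReal.tsum_mul_left]
          refine tsum_congr fun n => ?_
          rw [div_eq_mul_inv, mul_pow, ← ENNReal.inv_pow, show (2 : ℝ≥0∞) ^ 2 = 4 by norm_num,
            mul_left_comm, ENNReal.mul_inv_cancel (by norm_num) (by norm_num), mul_one]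
      _ < ⊤ := ENNReal.mul_lt_top (by norm_num) (ENNReal.tsum_lt_top_of_tsum_min_one_lt_top
          (fun n => ENNReal.pow_ne_top (ENNReal.div_ne_top (ha (n + 1)) two_ne_zero)) hmin)
  rw [tsum_eq_zero_add' ENNReal.summable]
  exact ENNReal.add_lt_top.mpr ⟨ENNReal.pow_lt_top (ha 0).lt_top, htail⟩

/-- Let `τ` be a locally finite positive Borel measure on `ℝ` supported in
`[0,∞)`.  Then the following are equivalent:
(a) `M_lτ ∈ L²((0,∞), dk)`;
(b) `Σₙ τ([n,n+1])² < ∞`;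
(c) `∫₀^∞ log[1 + (M_lτ(k)/k)²] k² dk < ∞`. -/
theorem stmt_3 (τ : Measure ℝ) [IsLocallyFiniteMeasure τ] (hsupp : τ (Iio 0) = 0) :
    List.TFAE
      [(∫⁻ k in Ioi (0 : ℝ), (maxLong τ k) ^ 2) < ⊤,
       (∑' n : ℕ, (τ (Icc (n : ℝ) ((n : ℝ) + 1))) ^ 2) < ⊤,
       (∫⁻ k in Ioi (0 : ℝ), logMaxLong τ k) < ⊤] := by
  tfae_have 1 → 3 := fun h =>
    (setLIntegral_mono' measurableSet_Ioi fun _ hk => logMaxLong_le_sq τ hk).trans_lt h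
  tfae_have 2 → 1 := fun h =>
    (lintegral_maxLong_sq_le hsupp).trans_lt (ENNReal.mul_lt_top (by norm_num) h)
  tfae_have 3 → 2 := tsum_sq_lt_top_of_lintegral_logMaxLong_lt_top τ
  tfae_finish
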